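/- arXiv:2206.00129 — 5 statements merged into one kernel-verified Lean document; each statement's English description precedes it below -/
import Mathlib

section
/- Let μ be a probability measure on a measurable space X, let ν be a probability measure absolutely continuous with respect to μ with square-integrable Radon–Nikodym derivative ω = dν/dμ, and let f : X → ℝ be measurable with 0 ≤ f ≤ 1. Writing β = ∫ f dμ for the source acceptance rate, one has |∫ f dν − ∫ f dμ| ≤ sqrt( β(1 − β) · Var_μ(ω) ), where Var_μ(ω) = ∫ (ω − 1)² dμ. -/
open MeasureTheory

lemma cs_integral {X : Type*} [MeasurableSpace X] (μ : Measure X) {g h : X → ℝ}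
    (hg : MemLp g 2 μ) (hh : MemLp h 2 μ) :
    |∫ x, g x * h x ∂μ| ≤ Real.sqrt (∫ x, g x ^ 2 ∂μ) * Real.sqrt (∫ x, h x ^ 2 ∂μ) := by
  set G := hg.toLp g
  set H := hh.toLp h
  have hGg : (G : X → ℝ) =ᵐ[μ] g := hg.coeFn_toLp
  have hHh : (H : X → ℝ) =ᵐ[μ] h := hh.coeFn_toLp
  have h1 : (inner ℝ G H : ℝ) = ∫ x, g x * h x ∂μ := by
    rw [L2.inner_def]
    refine integral_congr_ae ?_
    filter_upwards [hGg, hHh] with x hx hy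
    simp [hx, hy, RCLike.inner_apply, mul_comm]
  have h2 : ‖G‖ = Real.sqrt (∫ x, g x ^ 2 ∂μ) := by
    rw [norm_eq_sqrt_real_inner]
    congr 1
    rw [L2.inner_def]
    refine integral_congr_ae ?_
    filter_upwards [hGg] with x hx
    simp [hx, RCLike.inner_apply, sq]
  have h3 : ‖H‖ = Real.sqrt (∫ x, h x ^ 2 ∂μ) := by
    rw [norm_eq_sqrt_real_inner]
    congr 1
    rw [L2.inner_def]
    refine integral_congr_ae ?_
    filter_upwards [hHh] with x hx
    simp [hx, RCLike.inner_apply, sq]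
  calc |∫ x, g x * h x ∂μ| = |(inner ℝ G H : ℝ)| := by rw [h1]
    _ ≤ ‖G‖ * ‖H‖ := abs_real_inner_le_norm G H
    _ = _ := by rw [h2, h3]
/-- **Single-group covariate-shift step.** For probability measures `ν ≪ μ` with
square-integrable Radon–Nikodym derivative `ω = dν/dμ` and `f` measurable with values
in `[0,1]`, writing `β = ∫ f dμ`,
`|∫ f dν − ∫ f dμ| ≤ sqrt(β (1 − β) · Var_μ(ω))` where `Var_μ(ω) = ∫ (ω − 1)² dμ`. -/
theorem abs_integral_sub_le_sqrt_var {X : Type*} [MeasurableSpace X]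
    (μ ν : Measure X) [IsProbabilityMeasure μ] [IsProbabilityMeasure ν]
    (hac : ν ≪ μ)
    (hω : MemLp (fun x => (ν.rnDeriv μ x).toReal) 2 μ)
    (f : X → ℝ) (hf : Measurable f) (hf01 : ∀ x, 0 ≤ f x ∧ f x ≤ 1) :
    |∫ x, f x ∂ν - ∫ x, f x ∂μ| ≤
      Real.sqrt ((∫ x, f x ∂μ) * (1 - ∫ x, f x ∂μ)
        * ∫ x, ((ν.rnDeriv μ x).toReal - 1) ^ 2 ∂μ) := by
  set ω : X → ℝ := fun x => (ν.rnDeriv μ x).toReal with hωdef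
  set β : ℝ := ∫ x, f x ∂μ with hβ
  have hωnn : ∀ x, 0 ≤ ω x := fun x => ENNReal.toReal_nonneg
  have hfmem : MemLp f 2 μ :=
    MemLp.of_bound hf.aestronglyMeasurable 1
      (ae_of_all _ fun x => by
        rw [Real.norm_eq_abs, abs_le]; exact ⟨by linarith [(hf01 x).1], (hf01 x).2⟩)
  have hfint : Integrable f μ := hfmem.integrable (by norm_num)
  have hg : MemLp (fun x => ω x - 1) 2 μ := hω.sub (memLp_const 1)
  have hh : MemLp (fun x => f x - β) 2 μ := hfmem.sub (memLp_const β)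
  have hωint : Integrable ω μ := hω.integrable (by norm_num)
  have hω1 : ∫ x, ω x ∂μ = 1 := by
    rw [hωdef, Measure.integral_toReal_rnDeriv hac]
    simp
  have hrn : ∫ x, ω x * f x ∂μ = ∫ x, f x ∂ν := by
    simpa [smul_eq_mul] using MeasureTheory.integral_rnDeriv_smul (μ := ν) (ν := μ) hac (f := f)
  have hωf : Integrable (fun x => ω x * f x) μ := by
    refine hωint.mono' (hω.aestronglyMeasurable.mul hfmem.aestronglyMeasurable)
      (ae_of_all _ fun x => ?_)
    rw [Real.norm_eq_abs, abs_mul, abs_of_nonneg (hωnn x), abs_of_nonneg (hf01 x).1]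
    nlinarith [(hf01 x).2, hωnn x]
  have hcov : ∫ x, (ω x - 1) * (f x - β) ∂μ = ∫ x, f x ∂ν - β := by
    have hint1 : Integrable (fun x => ω x * f x - f x) μ := hωf.sub hfint
    have hint2 : Integrable (fun x => β * ω x - β) μ :=
      (hωint.const_mul β).sub (integrable_const β)
    have heq : ∀ x, (ω x - 1) * (f x - β) = (ω x * f x - f x) - (β * ω x - β) := by
      intro x; ring
    simp_rw [heq]
    rw [integral_sub hint1 hint2, integral_sub hωf hfint,
        integral_sub (hωint.const_mul β) (integrable_const β),
        integral_const_mul, hω1, hrn]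
    simp [hβ]
  have hsq_le : ∫ x, (f x - β) ^ 2 ∂μ ≤ β * (1 - β) := by
    have hf2int : Integrable (fun x => f x ^ 2) μ := hfmem.integrable_sq
    have hint3 : Integrable (fun x => 2 * β * f x - β ^ 2) μ :=
      (hfint.const_mul (2 * β)).sub (integrable_const _)
    have hexp : ∀ x, (f x - β) ^ 2 = f x ^ 2 - (2 * β * f x - β ^ 2) := by intro x; ring
    calc ∫ x, (f x - β) ^ 2 ∂μ
        = ∫ x, f x ^ 2 ∂μ - (2 * β * β - β ^ 2) := by
          simp_rw [hexp]
          rw [integral_sub hf2int hint3,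
              integral_sub (hfint.const_mul (2 * β)) (integrable_const _),
              integral_const_mul]
          simp [hβ]
      _ ≤ ∫ x, f x ∂μ - (2 * β * β - β ^ 2) := by
          apply sub_le_sub_right
          exact integral_mono hf2int hfint fun x => by
            nlinarith [(hf01 x).1, (hf01 x).2]
      _ = β * (1 - β) := by rw [← hβ]; ring
  have key : |∫ x, f x ∂ν - β| ≤
      Real.sqrt (∫ x, (ω x - 1) ^ 2 ∂μ) * Real.sqrt (∫ x, (f x - β) ^ 2 ∂μ) := by
    rw [← hcov]
    exact cs_integral μ hg hh
  calc |∫ x, f x ∂ν - β|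
      ≤ Real.sqrt (∫ x, (ω x - 1) ^ 2 ∂μ) * Real.sqrt (∫ x, (f x - β) ^ 2 ∂μ) := key
    _ ≤ Real.sqrt (∫ x, (ω x - 1) ^ 2 ∂μ) * Real.sqrt (β * (1 - β)) := by
        gcongr
    _ = Real.sqrt (β * (1 - β) * ∫ x, (ω x - 1) ^ 2 ∂μ) := by
        have h1 : 0 ≤ β := by rw [hβ]; exact integral_nonneg fun x => (hf01 x).1
        have h2 : β ≤ 1 := by
          rw [hβ]
          calc ∫ x, f x ∂μ ≤ ∫ x, (1 : ℝ) ∂μ :=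
                integral_mono hfint (integrable_const 1) fun x => (hf01 x).2
            _ = 1 := by simp
        rw [mul_comm, ← Real.sqrt_mul (by nlinarith : (0:ℝ) ≤ β * (1 - β))]
end

section
/- Let X be a measurable space, G a finite set of groups, and Y a finite set of classes. For each g ∈ G, let μ_g be the source feature distribution of group g, let ν_g be the target feature distribution with ν_g ≪ μ_g and square-integrable reweighting coefficient ω_g = dν_g/dμ_g satisfying Var_{μ_g}(ω_g) ≤ B_g, and for each y ∈ Y let f_{g,y} : X → [0,1] be the measurable probability that the fixed policy assigns class y to a group-g example. Writing β_{g,y} = ∫ f_{g,y} dμ_g, the multi-class demographic-parity violation on the target satisfies: Σ_{y∈Y} Σ_{{g,h} unordered pairs of distinct groups} |∫ f_{g,y} dν_g − ∫ f_{h,y} dν_h| ≤ Σ_{y∈Y} Σ_{{g,h}} |β_{g,y} − β_{h,y}| + Σ_{y∈Y} Σ_{{g,h}} ( sqrt(β_{g,y}(1−β_{g,y})·B_g) + sqrt(β_{h,y}(1−β_{h,y})·B_h) ). -/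
open MeasureTheory Finset

private lemma l2_mul_integrable {X : Type*} [MeasurableSpace X] {μ : Measure X} {u v : X → ℝ}
    (hu : MemLp u 2 μ) (hv : MemLp v 2 μ) : Integrable (fun x => u x * v x) μ := by
  have hm : AEStronglyMeasurable (fun x => u x * v x) μ := hu.1.mul hv.1
  refine ((hu.integrable_sq.add hv.integrable_sq).div_const 2).mono' hm
    (Filter.Eventually.of_forall fun x => ?_)
  simp only [Pi.add_apply, Real.norm_eq_abs, abs_mul]
  nlinarith [sq_nonneg (|u x| - |v x|), sq_abs (u x), sq_abs (v x),
    abs_nonneg (u x), abs_nonneg (v x)]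

private lemma cauchy_schwarz_int {X : Type*} [MeasurableSpace X] {μ : Measure X} {u v : X → ℝ}
    (hu : MemLp u 2 μ) (hv : MemLp v 2 μ) :
    |∫ x, u x * v x ∂μ| ≤ Real.sqrt (∫ x, u x ^ 2 ∂μ) * Real.sqrt (∫ x, v x ^ 2 ∂μ) := by
  have hconj : (2 : ℝ).HolderConjugate 2 := Real.HolderConjugate.two_two
  have h2 : (ENNReal.ofReal (2 : ℝ)) = 2 := by norm_num
  have hH := integral_mul_le_Lp_mul_Lq_of_nonneg hconj
    (Filter.Eventually.of_forall fun x => abs_nonneg (u x))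
    (Filter.Eventually.of_forall fun x => abs_nonneg (v x))
    (h2 ▸ hu.abs) (h2 ▸ hv.abs)
  have h1 : |∫ x, u x * v x ∂μ| ≤ ∫ x, |u x| * |v x| ∂μ := by
    rw [← Real.norm_eq_abs]
    refine (norm_integral_le_integral_norm _).trans ?_
    simp [abs_mul]
  have habs : ∀ a : ℝ, |a| ^ (2:ℝ) = a ^ 2 := fun a => by
    rw [show ((2:ℝ) = ((2:ℕ):ℝ)) by norm_num, Real.rpow_natCast, sq_abs]
  have hru : ∫ x, |u x| ^ (2:ℝ) ∂μ = ∫ x, u x ^ 2 ∂μ := by simp_rw [habs]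
  have hrv : ∫ x, |v x| ^ (2:ℝ) ∂μ = ∫ x, v x ^ 2 ∂μ := by simp_rw [habs]
  have hnu : 0 ≤ ∫ x, u x ^ 2 ∂μ := integral_nonneg fun x => sq_nonneg _
  have hnv : 0 ≤ ∫ x, v x ^ 2 ∂μ := integral_nonneg fun x => sq_nonneg _
  calc |∫ x, u x * v x ∂μ| ≤ ∫ x, |u x| * |v x| ∂μ := h1
    _ ≤ (∫ x, |u x| ^ (2:ℝ) ∂μ) ^ ((1:ℝ)/2) * (∫ x, |v x| ^ (2:ℝ) ∂μ) ^ ((1:ℝ)/2) := hH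
    _ = Real.sqrt (∫ x, u x ^ 2 ∂μ) * Real.sqrt (∫ x, v x ^ 2 ∂μ) := by
        rw [hru, hrv, Real.sqrt_eq_rpow, Real.sqrt_eq_rpow]

private lemma key_shift {X : Type*} [MeasurableSpace X] (μ ν : Measure X)
    [IsProbabilityMeasure μ] [IsProbabilityMeasure ν] (hac : ν ≪ μ)
    (hω : MemLp (fun x => (ν.rnDeriv μ x).toReal) 2 μ) {B : ℝ}
    (hB : ∫ x, ((ν.rnDeriv μ x).toReal - 1) ^ 2 ∂μ ≤ B)
    (f : X → ℝ) (hf : Measurable f) (hf01 : ∀ x, 0 ≤ f x ∧ f x ≤ 1) :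
    |(∫ x, f x ∂ν) - ∫ x, f x ∂μ| ≤
      Real.sqrt ((∫ x, f x ∂μ) * (1 - ∫ x, f x ∂μ) * B) := by
  set ω : X → ℝ := fun x => (ν.rnDeriv μ x).toReal with hωdef
  set β : ℝ := ∫ x, f x ∂μ with hβ
  have hf2 : MemLp f 2 μ :=
    MemLp.of_bound hf.aestronglyMeasurable 1 (Filter.Eventually.of_forall fun x => by
      rw [Real.norm_eq_abs, abs_le]; constructor <;> linarith [(hf01 x).1, (hf01 x).2])
  have hfi : Integrable f μ := hf2.integrable one_le_two
  have hωi : Integrable ω μ := hω.integrable one_le_two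
  have hωint : ∫ x, ω x ∂μ = 1 := by
    rw [hωdef, Measure.integral_toReal_rnDeriv hac]
    simp
  have hu : MemLp (fun x => f x - β) 2 μ := hf2.sub (memLp_const β)
  have hv : MemLp (fun x => ω x - 1) 2 μ := hω.sub (memLp_const 1)
  have hch : ∫ x, f x ∂ν = ∫ x, ω x * f x ∂μ := by
    rw [← integral_rnDeriv_smul hac]
    simp [hωdef, smul_eq_mul]
  have hωf : Integrable (fun x => ω x * f x) μ := l2_mul_integrable hω hf2
  have hmain : (∫ x, f x ∂ν) - β = ∫ x, (f x - β) * (ω x - 1) ∂μ := by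
    have hre : ∫ x, (f x - β) * (ω x - 1) ∂μ
        = ∫ x, (ω x * f x - f x) - (β * ω x - β) ∂μ :=
      integral_congr_ae (Filter.Eventually.of_forall fun x => by ring)
    have hA : Integrable (fun x => ω x * f x - f x) μ := hωf.sub hfi
    have hBi : Integrable (fun x => β * ω x - β) μ :=
      (hωi.const_mul β).sub (integrable_const β)
    have hBi2 : Integrable (fun x => β * ω x) μ := hωi.const_mul β
    rw [hre, integral_sub hA hBi, integral_sub hωf hfi,
      integral_sub hBi2 (integrable_const β), integral_const_mul, hωint, hch]
    simp [hβ]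
  have hβ0 : 0 ≤ β := integral_nonneg fun x => (hf01 x).1
  have hβ1 : β ≤ 1 := by
    have := integral_mono hfi (integrable_const 1) (fun x => (hf01 x).2)
    simpa using this
  have hB0 : 0 ≤ B := le_trans (integral_nonneg fun x => sq_nonneg _) hB
  have husq : ∫ x, (f x - β) ^ 2 ∂μ ≤ β * (1 - β) := by
    have hexp : ∫ x, (f x - β) ^ 2 ∂μ = ∫ x, (f x ^ 2 - 2 * β * f x + β ^ 2) ∂μ :=
      integral_congr_ae (Filter.Eventually.of_forall fun x => by ring)
    have hC : Integrable (fun x => f x ^ 2 - 2 * β * f x) μ :=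
      hf2.integrable_sq.sub (hfi.const_mul (2 * β))
    have hD : Integrable (fun x => 2 * β * f x) μ := hfi.const_mul (2 * β)
    rw [hexp, integral_add hC (integrable_const _), integral_sub hf2.integrable_sq hD,
      integral_const_mul, integral_const]
    have hsq : ∫ x, f x ^ 2 ∂μ ≤ β := by
      rw [hβ]
      refine integral_mono hf2.integrable_sq hfi fun x => ?_
      nlinarith [(hf01 x).1, (hf01 x).2]
    simp only [measure_univ, probReal_univ, ENNReal.toReal_one, smul_eq_mul, one_mul]
    nlinarith
  calc |(∫ x, f x ∂ν) - β| = |∫ x, (f x - β) * (ω x - 1) ∂μ| := by rw [hmain]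
    _ ≤ Real.sqrt (∫ x, (f x - β) ^ 2 ∂μ) * Real.sqrt (∫ x, (ω x - 1) ^ 2 ∂μ) :=
        cauchy_schwarz_int hu hv
    _ ≤ Real.sqrt (β * (1 - β)) * Real.sqrt B :=
        mul_le_mul (Real.sqrt_le_sqrt husq) (Real.sqrt_le_sqrt hB)
          (Real.sqrt_nonneg _) (Real.sqrt_nonneg _)
    _ = Real.sqrt (β * (1 - β) * B) := (Real.sqrt_mul (by nlinarith) B).symm

/-- **Corollary 1 (multi-class, multi-group demographic parity under covariate
shift).** For each group `g`, source features `μ g`, target features `ν g ≪ μ g` with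
square-integrable reweighting coefficient `ω_g = d(ν g)/d(μ g)` of variance at most
`B g`, and class-assignment probabilities `f g y : X → [0,1]`, writing
`β g y = ∫ f g y ∂(μ g)`, the multi-class demographic-parity violation on the target
(summed over classes and unordered pairs of distinct groups) is bounded by the source
violation plus the variance terms. -/
theorem dp_covariate_shift_multiclass_bound {X : Type*} [MeasurableSpace X]
    {G : Type*} [Fintype G] [DecidableEq G] {Y : Type*} [Fintype Y]
    (μ ν : G → Measure X)
    [∀ g, IsProbabilityMeasure (μ g)] [∀ g, IsProbabilityMeasure (ν g)]
    (hac : ∀ g, ν g ≪ μ g)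
    (hω : ∀ g, MemLp (fun x => ((ν g).rnDeriv (μ g) x).toReal) 2 (μ g))
    (B : G → ℝ)
    (hB : ∀ g, ∫ x, (((ν g).rnDeriv (μ g) x).toReal - 1) ^ 2 ∂(μ g) ≤ B g)
    (f : G → Y → X → ℝ) (hf : ∀ g y, Measurable (f g y))
    (hf01 : ∀ g y x, 0 ≤ f g y x ∧ f g y x ≤ 1) :
    (∑ y : Y, ∑ p ∈ Finset.univ.sym2.filter (fun p => ¬ p.IsDiag),
        Sym2.lift ⟨fun g h => |(∫ x, f g y x ∂(ν g)) - ∫ x, f h y x ∂(ν h)|,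
          fun _ _ => abs_sub_comm _ _⟩ p)
      ≤ (∑ y : Y, ∑ p ∈ Finset.univ.sym2.filter (fun p => ¬ p.IsDiag),
          Sym2.lift ⟨fun g h => |(∫ x, f g y x ∂(μ g)) - ∫ x, f h y x ∂(μ h)|,
            fun _ _ => abs_sub_comm _ _⟩ p)
        + ∑ y : Y, ∑ p ∈ Finset.univ.sym2.filter (fun p => ¬ p.IsDiag),
            Sym2.lift ⟨fun g h =>
              Real.sqrt ((∫ x, f g y x ∂(μ g)) * (1 - ∫ x, f g y x ∂(μ g)) * B g)
              + Real.sqrt ((∫ x, f h y x ∂(μ h)) * (1 - ∫ x, f h y x ∂(μ h)) * B h),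
              fun _ _ => add_comm _ _⟩ p := by
  have key : ∀ g y, |(∫ x, f g y x ∂(ν g)) - ∫ x, f g y x ∂(μ g)| ≤
      Real.sqrt ((∫ x, f g y x ∂(μ g)) * (1 - ∫ x, f g y x ∂(μ g)) * B g) :=
    fun g y => key_shift (μ g) (ν g) (hac g) (hω g) (hB g) (f g y) (hf g y) (hf01 g y)
  rw [← Finset.sum_add_distrib]
  refine Finset.sum_le_sum fun y _ => ?_
  rw [← Finset.sum_add_distrib]
  refine Finset.sum_le_sum fun p _ => ?_
  induction p using Sym2.ind with
  | _ g h =>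
    simp only [Sym2.lift_mk]
    calc |(∫ x, f g y x ∂(ν g)) - ∫ x, f h y x ∂(ν h)|
        = |((∫ x, f g y x ∂(μ g)) - ∫ x, f h y x ∂(μ h))
            + (((∫ x, f g y x ∂(ν g)) - ∫ x, f g y x ∂(μ g))
              - ((∫ x, f h y x ∂(ν h)) - ∫ x, f h y x ∂(μ h)))| := by ring_nf
      _ ≤ |(∫ x, f g y x ∂(μ g)) - ∫ x, f h y x ∂(μ h)|
            + |((∫ x, f g y x ∂(ν g)) - ∫ x, f g y x ∂(μ g))
              - ((∫ x, f h y x ∂(ν h)) - ∫ x, f h y x ∂(μ h))| := abs_add_le _ _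
      _ ≤ |(∫ x, f g y x ∂(μ g)) - ∫ x, f h y x ∂(μ h)|
            + (|(∫ x, f g y x ∂(ν g)) - ∫ x, f g y x ∂(μ g)|
              + |(∫ x, f h y x ∂(ν h)) - ∫ x, f h y x ∂(μ h)|) := by
          gcongr; exact abs_sub _ _
      _ ≤ _ := by gcongr <;> [exact key g y; exact key h y]
end

section
/- Let G be a finite set of groups with n = |G| and fix a_g, b_g ∈ [0,1] for each g ∈ G. For q : G → [0,1], define β_g(q) = a_g·q_g + b_g·(1 − q_g) and Δ(q) = Σ over unordered pairs {g,h} of distinct groups of |β_g(q) − β_h(q)|. If q, q' : G → [0,1] satisfy |q_g − q'_g| ≤ B_g for every g ∈ G, then Δ(q') ≤ Δ(q) + (n − 1)·Σ_{g∈G} B_g·|a_g − b_g|. -/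
/-!
Under label shift the acceptance rate of group `g` moves by exactly `(a g - b g) * (q' g - q g)`,
hence by at most `B g * |a g - b g|`. Summing the triangle inequality
`|β'_g - β'_h| ≤ |β_g - β_h| + |β'_g - β_g| + |β'_h - β_h|` over the unordered pairs charges the
shift of each group once for every pair it lies in, that is `|G| - 1` times.
-/

open Finset

/-- The demographic-parity disparity `Δ(q)` of a policy with group true positive
rates `a`, false positive rates `b`, and group qualification rates `q`: the sum over
unordered pairs of distinct groups of the absolute difference of acceptance rates
`β_g(q) = a g * q g + b g * (1 − q g)`. -/
noncomputable def dpDisparity {G : Type*} [Fintype G] [DecidableEq G]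
    (a b q : G → ℝ) : ℝ :=
  ∑ p ∈ Finset.univ.sym2.filter (fun p => ¬ p.IsDiag),
    Sym2.lift ⟨fun g h =>
      |(a g * q g + b g * (1 - q g)) - (a h * q h + b h * (1 - q h))|,
      fun _ _ => abs_sub_comm _ _⟩ p

namespace Finset

theorem sum_offDiag_fst {α R : Type*} [Ring R] (s : Finset α) (e : α → R) :
    ∑ p ∈ s.offDiag, e p.1 = ((#s : R) - 1) * ∑ i ∈ s, e i := by
  classical
  have h := sum_union (disjoint_diag_offDiag s) (f := fun p => e p.1)
  rw [diag_union_offDiag] at h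
  simp only [sum_product, sum_const, diag, sum_map, Function.Embedding.coeFn_mk,
    Function.diag] at h
  rw [sub_mul, one_mul, mul_sum, eq_sub_iff_add_eq', ← h]
  simp [nsmul_eq_mul]

theorem sum_offDiag_filter_lt_add {α M : Type*} [LinearOrder α] [AddCommMonoid M]
    (s : Finset α) (e : α → M) :
    ∑ p ∈ s.offDiag with p.1 < p.2, (e p.1 + e p.2) = ∑ p ∈ s.offDiag, e p.1 := by
  have hswap : ∑ p ∈ s.offDiag with p.1 < p.2, e p.2
      = ∑ p ∈ s.offDiag with ¬ p.1 < p.2, e p.1 := by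
    refine sum_nbij' Prod.swap Prod.swap ?_ ?_ (by simp) (by simp) (by simp)
    · simp +contextual [ne_comm, le_of_lt]
    · simp +contextual [ne_comm, lt_iff_le_and_ne]
  rw [sum_add_distrib, hswap, sum_filter_add_sum_filter_not]

theorem sum_sym2_filter_not_isDiag_lift_add {α R : Type*} [DecidableEq α] [Ring R]
    (s : Finset α) (e : α → R) :
    ∑ z ∈ s.sym2 with ¬ z.IsDiag, Sym2.lift ⟨fun i j => e i + e j, fun _ _ => add_comm _ _⟩ z
      = ((#s : R) - 1) * ∑ i ∈ s, e i := by
  classical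
  -- Any linear order will do: it only selects one ordered representative of each pair.
  let : LinearOrder α := linearOrderOfSTO WellOrderingRel
  rw [← sum_offDiag_fst, ← sum_offDiag_filter_lt_add]
  convert sum_sym2_filter_not_isDiag s _
  rfl

end Finset

section PairwiseDispersion

variable {α R : Type*} [DecidableEq α] [Ring R] [LinearOrder R] [IsOrderedRing R]

def pairwiseDispersion (s : Finset α) (f : α → R) : R :=
  ∑ z ∈ s.sym2 with ¬ z.IsDiag, Sym2.lift ⟨fun i j => |f i - f j|, fun _ _ => abs_sub_comm _ _⟩ z

theorem pairwiseDispersion_le_add {s : Finset α} {f f' e : α → R}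
    (h : ∀ i ∈ s, |f' i - f i| ≤ e i) :
    pairwiseDispersion s f' ≤ pairwiseDispersion s f + ((#s : R) - 1) * ∑ i ∈ s, e i := by
  rw [pairwiseDispersion, pairwiseDispersion, ← sum_sym2_filter_not_isDiag_lift_add,
    ← sum_add_distrib]
  refine sum_le_sum fun z hz => ?_
  induction z using Sym2.ind with | _ i j => ?_
  obtain ⟨hi, hj⟩ := mk_mem_sym2_iff.mp (mem_filter.mp hz).1
  have hj' : |f j - f' j| ≤ e j := abs_sub_comm (f' j) (f j) ▸ h j hj
  calc |f' i - f' j| ≤ |f' i - f i| + |f i - f j| + |f j - f' j| := by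
        simpa using abs_add_three (f' i - f i) (f i - f j) (f j - f' j)
    _ = |f i - f j| + (|f' i - f i| + |f j - f' j|) := by abel
    _ ≤ |f i - f j| + (e i + e j) := add_le_add_right (add_le_add (h i hi) hj') _

end PairwiseDispersion

section AcceptanceRate

variable {G R : Type*} [CommRing R]

def acceptanceRate (a b q : G → R) (g : G) : R := a g * q g + b g * (1 - q g)

theorem acceptanceRate_sub_acceptanceRate (a b q q' : G → R) (g : G) :
    acceptanceRate a b q' g - acceptanceRate a b q g = (a g - b g) * (q' g - q g) := by
  simp only [acceptanceRate]
  ring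

theorem abs_acceptanceRate_sub_le [LinearOrder R] [IsStrictOrderedRing R]
    {a b q q' : G → R} {g : G} {B : R} (h : |q g - q' g| ≤ B) :
    |acceptanceRate a b q' g - acceptanceRate a b q g| ≤ B * |a g - b g| := by
  rw [acceptanceRate_sub_acceptanceRate, abs_mul, mul_comm, abs_sub_comm (q' g)]
  exact mul_le_mul_of_nonneg_right h (abs_nonneg _)

theorem dpDisparity_eq_pairwiseDispersion [Fintype G] [DecidableEq G] (a b q : G → ℝ) :
    dpDisparity a b q = pairwiseDispersion univ (acceptanceRate a b q) :=
  rfl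

end AcceptanceRate

theorem dp_label_shift_bound_general {G : Type*} [Fintype G] [DecidableEq G]
    (a b : G → ℝ) (q q' : G → ℝ)
    (B : G → ℝ) (hB : ∀ g, |q g - q' g| ≤ B g) :
    dpDisparity a b q' ≤ dpDisparity a b q
      + ((Fintype.card G : ℝ) - 1) * ∑ g : G, B g * |a g - b g| := by
  rw [dpDisparity_eq_pairwiseDispersion, dpDisparity_eq_pairwiseDispersion, ← card_univ]
  exact pairwiseDispersion_le_add fun g _ => abs_acceptanceRate_sub_le (hB g)

/-- **Theorem 6 (demographic parity under bounded label shift).** If the source and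
target qualification rates satisfy `|q g − q' g| ≤ B g` for every group `g`, then the
target demographic-parity disparity is bounded by the source disparity plus
`(|G| − 1) · ∑ g, B g · |a g − b g|`. -/
theorem dp_label_shift_bound {G : Type*} [Fintype G] [DecidableEq G]
    (a b : G → ℝ) (ha : ∀ g, 0 ≤ a g ∧ a g ≤ 1) (hb : ∀ g, 0 ≤ b g ∧ b g ≤ 1)
    (q q' : G → ℝ) (hq : ∀ g, 0 ≤ q g ∧ q g ≤ 1) (hq' : ∀ g, 0 ≤ q' g ∧ q' g ≤ 1)
    (B : G → ℝ) (hB : ∀ g, |q g - q' g| ≤ B g) :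
    dpDisparity a b q' ≤ dpDisparity a b q
      + ((Fintype.card G : ℝ) - 1) * ∑ g : G, B g * |a g - b g| :=
  dp_label_shift_bound_general a b q q' B hB
end

section
/- For k ∈ {g,h}, let τ_k, m_k satisfy 0 < m_k, m_k ≤ τ_k, τ_k + m_k ≤ 1, let the source feature distribution of each group be the uniform distribution on [0,1], let the policy accept exactly when x ≥ τ_k (so f_k(x) = 1[x ≥ τ_k]), and let the target feature distribution of group k have density ω_k relative to the uniform distribution, where ω_k(x) = 1 on [0, τ_k − m_k) and [τ_k + m_k, 1], ω_k(x) = (τ_k − x)/m_k on [τ_k − m_k, τ_k), and ω_k(x) = (τ_k + 2m_k − x)/m_k on [τ_k, τ_k + m_k). Then the target demographic-parity violation satisfies |∫₀¹ f_g(x)ω_g(x) dx − ∫₀¹ f_h(x)ω_h(x) dx| ≤ |τ_g − τ_h| + sqrt( τ_g(1 − τ_g)·(2/3)m_g ) + sqrt( τ_h(1 − τ_h)·(2/3)m_h ). -/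
/-!
Only agents at or above the threshold are accepted, so the target acceptance rate of a group is
`∫_τ^1 ω = 1 - τ + m/2`: the mass `m/2` that `ω` removes from `[τ - m, τ)` reappears in
`[τ, τ + m)`. The target violation is therefore
`|(τ_h - τ_g) + (m_g - m_h)/2| ≤ |τ_g - τ_h| + m_g/2 + m_h/2`, and `m/2` is dominated by the
Cauchy–Schwarz term because `m ≤ min(τ, 1 - τ)` forces `τ(1 - τ) ≥ m/2`.
-/

open MeasureTheory Set intervalIntegral

theorem intervalIntegral_threshold_mul {a b τ : ℝ} (haτ : a < τ) (hτb : τ ≤ b) (f : ℝ → ℝ) :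
    ∫ x in a..b, (if τ ≤ x then (1:ℝ) else 0) * f x = ∫ x in τ..b, f x := by
  have hind : (fun x => (if τ ≤ x then (1:ℝ) else 0) * f x) = (Ici τ).indicator f := by
    ext x
    simp [indicator_apply]
  have hset : Ioc a b ∩ Ici τ = Icc τ b := by
    ext x
    simp only [mem_inter_iff, mem_Ioc, mem_Ici, mem_Icc]
    constructor
    · rintro ⟨⟨-, hxb⟩, hτx⟩
      exact ⟨hτx, hxb⟩
    · rintro ⟨hτx, hxb⟩
      exact ⟨⟨haτ.trans_le hτx, hxb⟩, hτx⟩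
  rw [hind, integral_of_le (haτ.le.trans hτb), integral_of_le hτb,
    setIntegral_indicator measurableSet_Ici, hset, integral_Icc_eq_integral_Ioc]

theorem integral_strategic_weight {τ m b : ℝ} (hm : 0 < m) (hτmb : τ + m ≤ b) {ω : ℝ → ℝ}
    (hω_shift : ∀ x, τ ≤ x → x < τ + m → ω x = (τ + 2 * m - x) / m)
    (hω_far : ∀ x, τ + m ≤ x → x ≤ b → ω x = 1) :
    ∫ x in τ..b, ω x = b - τ + m / 2 := by
  -- the affine formula also gives `1` at `x = τ + m`, so it describes `ω` on the closed interval
  have h_shift : EqOn ω (fun x => (τ + 2 * m - x) / m) (uIcc τ (τ + m)) := by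
    intro x hx
    rw [uIcc_of_le (by linarith)] at hx
    rcases hx.2.lt_or_eq with hlt | rfl
    · exact hω_shift x hx.1 hlt
    · rw [hω_far _ le_rfl hτmb]
      field_simp
      ring
  have h_far : EqOn ω (fun _ => 1) (uIcc (τ + m) b) := by
    intro x hx
    rw [uIcc_of_le hτmb] at hx
    exact hω_far x hx.1 hx.2
  have hi_shift : IntervalIntegrable ω volume τ (τ + m) :=
    (((continuous_const.sub continuous_id).div_const m).continuousOn.congr h_shift).intervalIntegrable
  have hi_far : IntervalIntegrable ω volume (τ + m) b :=
    (continuousOn_const.congr h_far).intervalIntegrable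
  rw [← integral_add_adjacent_intervals hi_shift hi_far, integral_congr h_shift,
    integral_congr h_far, intervalIntegral.integral_div,
    intervalIntegral.integral_sub intervalIntegrable_const intervalIntegrable_id,
    integral_id, intervalIntegral.integral_const, intervalIntegral.integral_const]
  field_simp
  ring

theorem half_le_sqrt_mul_variance {τ m : ℝ} (hm : 0 ≤ m) (hmτ : m ≤ τ) (hτm : τ + m ≤ 1) :
    m / 2 ≤ Real.sqrt (τ * (1 - τ) * (2 / 3 * m)) := by
  apply Real.le_sqrt_of_sq_le
  nlinarith [mul_nonneg (sub_nonneg.mpr hmτ) (by linarith : (0:ℝ) ≤ 1 - τ - m)]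

theorem dp_strategic_response_bound_general (τg τh mg mh : ℝ)
    (hmg : 0 < mg) (hmτg : mg ≤ τg) (hτmg : τg + mg ≤ 1)
    (hmh : 0 < mh) (hmτh : mh ≤ τh) (hτmh : τh + mh ≤ 1)
    (ωg ωh : ℝ → ℝ)
    (hωg3 : ∀ x, τg ≤ x → x < τg + mg → ωg x = (τg + 2 * mg - x) / mg)
    (hωg4 : ∀ x, τg + mg ≤ x → x ≤ 1 → ωg x = 1)
    (hωh3 : ∀ x, τh ≤ x → x < τh + mh → ωh x = (τh + 2 * mh - x) / mh)
    (hωh4 : ∀ x, τh + mh ≤ x → x ≤ 1 → ωh x = 1) :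
    |(∫ x in (0:ℝ)..1, (if τg ≤ x then (1:ℝ) else 0) * ωg x)
        - ∫ x in (0:ℝ)..1, (if τh ≤ x then (1:ℝ) else 0) * ωh x|
      ≤ |τg - τh| + Real.sqrt (τg * (1 - τg) * (2 / 3 * mg))
        + Real.sqrt (τh * (1 - τh) * (2 / 3 * mh)) := by
  rw [intervalIntegral_threshold_mul (hmg.trans_le hmτg) (by linarith),
    intervalIntegral_threshold_mul (hmh.trans_le hmτh) (by linarith),
    integral_strategic_weight hmg hτmg hωg3 hωg4, integral_strategic_weight hmh hτmh hωh3 hωh4]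
  have hg := half_le_sqrt_mul_variance hmg.le hmτg hτmg
  have hh := half_le_sqrt_mul_variance hmh.le hmτh hτmh
  rw [abs_le]
  constructor <;> linarith [le_abs_self (τg - τh), neg_abs_le (τg - τh)]

/-- **Proposition 1 (demographic parity under strategic response).** For two groups
`k ∈ {g, h}` with threshold policies `1[x ≥ τ_k]`, uniform source features on `[0,1]`,
and target feature densities given by the strategic-response reweighting coefficients
`ω_k`, the target demographic-parity violation is at most the source violation
`|τ_g − τ_h|` plus `∑_k sqrt(τ_k (1 − τ_k) · (2/3) m_k)`. -/
theorem dp_strategic_response_bound (τg τh mg mh : ℝ)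
    (hmg : 0 < mg) (hmτg : mg ≤ τg) (hτmg : τg + mg ≤ 1)
    (hmh : 0 < mh) (hmτh : mh ≤ τh) (hτmh : τh + mh ≤ 1)
    (ωg ωh : ℝ → ℝ)
    (hωg1 : ∀ x, 0 ≤ x → x < τg - mg → ωg x = 1)
    (hωg2 : ∀ x, τg - mg ≤ x → x < τg → ωg x = (τg - x) / mg)
    (hωg3 : ∀ x, τg ≤ x → x < τg + mg → ωg x = (τg + 2 * mg - x) / mg)
    (hωg4 : ∀ x, τg + mg ≤ x → x ≤ 1 → ωg x = 1)
    (hωh1 : ∀ x, 0 ≤ x → x < τh - mh → ωh x = 1)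
    (hωh2 : ∀ x, τh - mh ≤ x → x < τh → ωh x = (τh - x) / mh)
    (hωh3 : ∀ x, τh ≤ x → x < τh + mh → ωh x = (τh + 2 * mh - x) / mh)
    (hωh4 : ∀ x, τh + mh ≤ x → x ≤ 1 → ωh x = 1) :
    |(∫ x in (0:ℝ)..1, (if τg ≤ x then (1:ℝ) else 0) * ωg x)
        - ∫ x in (0:ℝ)..1, (if τh ≤ x then (1:ℝ) else 0) * ωh x|
      ≤ |τg - τh| + Real.sqrt (τg * (1 - τg) * (2 / 3 * mg))
        + Real.sqrt (τh * (1 - τh) * (2 / 3 * mh)) :=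
  dp_strategic_response_bound_general τg τh mg mh hmg hmτg hτmg hmh hmτh hτmh ωg ωh hωg3 hωg4 hωh3
    hωh4
end

section
/- Let ξ ∈ (0, π) and let φˡ ≤ φ ≤ φᵘ be real numbers such that cos(ξ − y) > 0 for every y ∈ [φˡ, φᵘ]. Then cos(φᵘ)/cos(ξ − φᵘ) ≤ cos(φ)/cos(ξ − φ) ≤ cos(φˡ)/cos(ξ − φˡ). -/
private lemma cos_key (ξ a b : ℝ) :
    Real.cos a * Real.cos (ξ - b) - Real.cos b * Real.cos (ξ - a)
      = Real.sin ξ * Real.sin (b - a) := by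
  simp [Real.cos_sub, Real.sin_sub]; ring

/-- **Theorem 8 (geometric bound on the true positive rate).** For `ξ ∈ (0, π)` and
angles `φˡ ≤ φ ≤ φᵘ` such that `cos (ξ − y) > 0` throughout `[φˡ, φᵘ]`, the ratio
`cos φ / cos (ξ − φ)` is sandwiched between its values at the extremal angles:
`cos φᵘ / cos (ξ − φᵘ) ≤ cos φ / cos (ξ − φ) ≤ cos φˡ / cos (ξ − φˡ)`. -/
theorem cos_ratio_bounds (ξ φl φ φu : ℝ) (hξ : ξ ∈ Set.Ioo 0 Real.pi)
    (hl : φl ≤ φ) (hu : φ ≤ φu)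
    (hcos : ∀ y ∈ Set.Icc φl φu, 0 < Real.cos (ξ - y)) :
    Real.cos φu / Real.cos (ξ - φu) ≤ Real.cos φ / Real.cos (ξ - φ) ∧
      Real.cos φ / Real.cos (ξ - φ) ≤ Real.cos φl / Real.cos (ξ - φl) := by
  obtain ⟨hξ0, hξπ⟩ := hξ
  have hsinξ : 0 < Real.sin ξ := Real.sin_pos_of_pos_of_lt_pi hξ0 hξπ
  have hπ : (0:ℝ) < Real.pi := Real.pi_pos
  -- the interval has length < π
  have hlen : φu - φl < Real.pi := by
    by_contra h
    push_neg at h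
    set k : ℤ := ⌈(ξ - φu - Real.pi / 2) / Real.pi⌉ with hk
    set y0 : ℝ := Real.pi / 2 + k * Real.pi with hy0
    have h1 : ξ - φu ≤ y0 := by
      have := Int.le_ceil ((ξ - φu - Real.pi / 2) / Real.pi)
      rw [div_le_iff₀ hπ] at this
      rw [hy0]; linarith
    have h2 : y0 ≤ ξ - φl := by
      have := Int.ceil_lt_add_one ((ξ - φu - Real.pi / 2) / Real.pi)
      have h3 : ((k:ℝ) - 1) < (ξ - φu - Real.pi / 2) / Real.pi := by linarith
      have h2' : ((k:ℝ) - 1) * Real.pi < ξ - φu - Real.pi / 2 :=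
        (lt_div_iff₀ hπ).mp h3
      rw [hy0]; linarith
    have hmem : ξ - y0 ∈ Set.Icc φl φu := ⟨by linarith, by linarith⟩
    have := hcos _ hmem
    have hz : Real.cos (ξ - (ξ - y0)) = 0 := by
      have : ξ - (ξ - y0) = y0 := by ring
      rw [this, hy0]
      rw [Real.cos_eq_zero_iff]
      exact ⟨k, by push_cast; ring⟩
    rw [hz] at this
    exact lt_irrefl 0 this
  have hφl : 0 < Real.cos (ξ - φl) := hcos φl ⟨le_rfl, le_trans hl hu⟩
  have hφu : 0 < Real.cos (ξ - φu) := hcos φu ⟨le_trans hl hu, le_rfl⟩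
  have hφ : 0 < Real.cos (ξ - φ) := hcos φ ⟨hl, hu⟩
  constructor
  · rw [div_le_div_iff₀ hφu hφ]
    have hsin : 0 ≤ Real.sin (φu - φ) :=
      Real.sin_nonneg_of_nonneg_of_le_pi (by linarith) (by linarith)
    nlinarith [cos_key ξ φ φu, mul_nonneg hsinξ.le hsin]
  · rw [div_le_div_iff₀ hφ hφl]
    have hsin : 0 ≤ Real.sin (φ - φl) :=
      Real.sin_nonneg_of_nonneg_of_le_pi (by linarith) (by linarith)
    nlinarith [cos_key ξ φl φ, mul_nonneg hsinξ.le hsin]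
end
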